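/- Let (X,d) be a metric space and q ≥ 1. Define D : (X × [0,∞)) × (X × [0,∞)) → [0,∞) by D((x,r),(y,s)) = ( r + s − min(r,s)·max(2 − d(x,y)^q, 0) )^{1/q}. Then D is symmetric, satisfies the triangle inequality D((x,r),(z,t)) ≤ D((x,r),(y,s)) + D((y,s),(z,t)) for all (x,r), (y,s), (z,t) ∈ X × [0,∞), and D((x,r),(y,s)) = 0 if and only if (r = s = 0) or (x = y and r = s). Consequently D descends to a distance on the cone Co[X] = (X × [0,∞)) / (X × {0}). -/

import Mathlib

/-!
Put `δ = min(d, 2^{1/q})`, again a metric, so that `D^q = |r - s| + (r ∧ s) δ^q`: this is the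
`q`-th power of the `ℓ^q` norm of `(|r - s|^{1/q}, (r ∧ s)^{1/q} δ)`, and the triangle inequality
is Minkowski's inequality for such vectors. If `s ≥ r ∧ t`, all three terms are compared at the
common mass `r ∧ t` and `|r - t| ≤ |r - s| + |s - t|`. If `s < r ∧ t`, only the mass `s` is
transported along `x → y → z`; the excess `r ∧ t - s` costs at most `δ^q ≤ 2` per unit at `(x, z)`,
which is exactly what the radial legs `r - s` and `t - s` pay for it.
-/

open NNReal

noncomputable section

theorem min_le_min_add_min {α : Type*} [AddCommMonoid α] [LinearOrder α] [IsOrderedAddMonoid α]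
    {a b c M : α} (ha : 0 ≤ a) (hb : 0 ≤ b) (hM : 0 ≤ M) (h : c ≤ a + b) :
    min c M ≤ min a M + min b M := by
  rcases le_total M a with haM | haM
  · calc min c M ≤ M := min_le_right _ _
      _ = min a M := (min_eq_right haM).symm
      _ ≤ min a M + min b M := le_add_of_nonneg_right (le_min hb hM)
  rcases le_total M b with hbM | hbM
  · calc min c M ≤ M := min_le_right _ _
      _ = min b M := (min_eq_right hbM).symm
      _ ≤ min a M + min b M := le_add_of_nonneg_left (le_min ha hM)
  calc min c M ≤ c := min_le_left _ _
    _ ≤ a + b := h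
    _ = min a M + min b M := by rw [min_eq_left haM, min_eq_left hbM]

theorem add_sub_min_mul_max_two_sub (r s c : ℝ) :
    r + s - min r s * max (2 - c) 0 = |r - s| + min r s * min c 2 := by
  have hmax : max (2 - c) 0 = 2 - min c 2 := by rw [← max_sub_sub_left, sub_self]
  rw [hmax, ← min_add_max r s, abs_sub_comm, ← max_sub_min_eq_abs]
  ring

namespace Real

variable {q : ℝ}

theorem min_rpow_one_div_rpow (hq : 0 < q) {x c : ℝ} (hx : 0 ≤ x) (hc : 0 ≤ c) :
    min x (c ^ (1 / q)) ^ q = min (x ^ q) c := by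
  rw [(monotoneOn_rpow_Ici_of_exponent_nonneg hq.le).map_min hx (rpow_nonneg hc _),
    one_div, rpow_inv_rpow hc hq.ne']

/-- Minkowski's inequality in `ℓ^q(ℝ²)` for `(x^{1/q}, m^{1/q} α)` and `(y^{1/q}, m^{1/q} β)`,
with `x + y ≤ (x^{1/q} + y^{1/q})^q` in the first coordinate. -/
theorem add_add_mul_add_rpow_one_div_le (hq : 1 ≤ q) {x y m α β : ℝ} (hx : 0 ≤ x) (hy : 0 ≤ y)
    (hm : 0 ≤ m) (hα : 0 ≤ α) (hβ : 0 ≤ β) :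
    (x + y + m * (α + β) ^ q) ^ (1 / q)
      ≤ (x + m * α ^ q) ^ (1 / q) + (y + m * β ^ q) ^ (1 / q) := by
  have hq0 : q ≠ 0 := by positivity
  have hroot : ∀ z : ℝ, 0 ≤ z → (z ^ (1 / q)) ^ q = z := fun z hz => by
    rw [one_div, rpow_inv_rpow hz hq0]
  have hscale : ∀ γ : ℝ, 0 ≤ γ → (m ^ (1 / q) * γ) ^ q = m * γ ^ q := fun γ hγ => by
    rw [mul_rpow (rpow_nonneg hm _) hγ, hroot m hm]
  have hsplit : x + y ≤ (x ^ (1 / q) + y ^ (1 / q)) ^ q := by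
    simpa only [hroot x hx, hroot y hy] using
      add_rpow_le_rpow_add (rpow_nonneg hx (1 / q)) (rpow_nonneg hy (1 / q)) hq
  have hmink := Lp_add_le_of_nonneg (s := Finset.univ)
    (f := ![x ^ (1 / q), m ^ (1 / q) * α]) (g := ![y ^ (1 / q), m ^ (1 / q) * β]) hq
    (fun i _ => by fin_cases i; exacts [rpow_nonneg hx _, mul_nonneg (rpow_nonneg hm _) hα])
    (fun i _ => by fin_cases i; exacts [rpow_nonneg hy _, mul_nonneg (rpow_nonneg hm _) hβ])
  simp only [Fin.sum_univ_two, Matrix.cons_val_zero, Matrix.cons_val_one, ← mul_add,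
    hroot x hx, hroot y hy, hscale α hα, hscale β hβ, hscale _ (add_nonneg hα hβ)] at hmink
  refine le_trans ?_ hmink
  gcongr

end Real

def truncConeDist (q r s δ : ℝ) : ℝ :=
  (|r - s| + min r s * δ ^ q) ^ (1 / q)

section truncConeDist

variable {q r s t : ℝ}

theorem truncConeDist_triangle (hq : 1 ≤ q) (hr : 0 ≤ r) (hs : 0 ≤ s) (ht : 0 ≤ t)
    {α β γ : ℝ} (hα : 0 ≤ α) (hβ : 0 ≤ β) (hγ : 0 ≤ γ) (hγ2 : γ ^ q ≤ 2) (hγαβ : γ ≤ α + β) :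
    truncConeDist q r t γ ≤ truncConeDist q r s α + truncConeDist q s t β := by
  have hγq : γ ^ q ≤ (α + β) ^ q := Real.rpow_le_rpow hγ hγαβ (by positivity)
  unfold truncConeDist
  rcases le_or_gt (min r t) s with hmid | hlow
  · have hm : 0 ≤ min r t := le_min hr ht
    calc (|r - t| + min r t * γ ^ q) ^ (1 / q)
        ≤ (|r - s| + |s - t| + min r t * (α + β) ^ q) ^ (1 / q) := by
          gcongr
          exact abs_sub_le r s t
      _ ≤ (|r - s| + min r t * α ^ q) ^ (1 / q) + (|s - t| + min r t * β ^ q) ^ (1 / q) :=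
          Real.add_add_mul_add_rpow_one_div_le hq (abs_nonneg _) (abs_nonneg _) hm hα hβ
      _ ≤ (|r - s| + min r s * α ^ q) ^ (1 / q) + (|s - t| + min s t * β ^ q) ^ (1 / q) := by
          have hrs : min r t ≤ min r s := le_min (min_le_left _ _) hmid
          have hst : min r t ≤ min s t := le_min hmid (min_le_right _ _)
          gcongr
  · have hsr : s ≤ r := hlow.le.trans (min_le_left _ _)
    have hst : s ≤ t := hlow.le.trans (min_le_right _ _)
    have hexcess : |r - t| + min r t * γ ^ q ≤ (r - s) + (t - s) + s * γ ^ q := by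
      have hrt : |r - t| + 2 * min r t = r + t := by
        rw [abs_sub_comm, ← max_sub_min_eq_abs]
        linarith [min_add_max r t]
      linarith [mul_le_mul_of_nonneg_left hγ2 (sub_nonneg.2 hlow.le)]
    calc (|r - t| + min r t * γ ^ q) ^ (1 / q)
        ≤ ((r - s) + (t - s) + s * (α + β) ^ q) ^ (1 / q) :=
          Real.rpow_le_rpow (by positivity) (hexcess.trans (by gcongr)) (by positivity)
      _ ≤ ((r - s) + s * α ^ q) ^ (1 / q) + ((t - s) + s * β ^ q) ^ (1 / q) :=
          Real.add_add_mul_add_rpow_one_div_le hq (by linarith) (by linarith) hs hα hβ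
      _ = (|r - s| + min r s * α ^ q) ^ (1 / q) + (|s - t| + min s t * β ^ q) ^ (1 / q) := by
          rw [abs_of_nonneg (sub_nonneg.2 hsr), abs_sub_comm, abs_of_nonneg (sub_nonneg.2 hst),
            min_eq_right hsr, min_eq_left hst]

theorem truncConeDist_eq_zero_iff (hq : q ≠ 0) (hr : 0 ≤ r) (hs : 0 ≤ s) {δ : ℝ} (hδ : 0 ≤ δ) :
    truncConeDist q r s δ = 0 ↔ r = s ∧ (r = 0 ∨ δ = 0) := by
  unfold truncConeDist
  rw [Real.rpow_eq_zero (by positivity) (one_div_ne_zero hq),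
    add_eq_zero_iff_of_nonneg (abs_nonneg _) (by positivity), abs_eq_zero, sub_eq_zero,
    mul_eq_zero, Real.rpow_eq_zero hδ hq]
  constructor
  · rintro ⟨rfl, h⟩
    exact ⟨rfl, by rwa [min_self] at h⟩
  · rintro ⟨rfl, h⟩
    exact ⟨rfl, by rwa [min_self]⟩

end truncConeDist

/-- The cone cost of partial optimal transport on `X × [0,∞)`:
`D((x,r),(y,s)) = (r + s − min(r,s)·max(2 − d(x,y)^q, 0))^{1/q}`. -/
def tvConeDist {X : Type*} [MetricSpace X] (q : ℝ) (a b : X × ℝ≥0) : ℝ :=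
  ((a.2 : ℝ) + (b.2 : ℝ)
      - min (a.2 : ℝ) (b.2 : ℝ) * max (2 - dist a.1 b.1 ^ q) 0) ^ (1 / q)

section tvConeDist

variable {X : Type*} [MetricSpace X] {q : ℝ}

theorem tvConeDist_comm (a b : X × ℝ≥0) : tvConeDist q a b = tvConeDist q b a := by
  unfold tvConeDist
  rw [dist_comm, min_comm, add_comm (a.2 : ℝ)]

theorem tvConeDist_eq_truncConeDist (hq : 0 < q) (a b : X × ℝ≥0) :
    tvConeDist q a b = truncConeDist q a.2 b.2 (min (dist a.1 b.1) (2 ^ (1 / q))) := by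
  unfold tvConeDist truncConeDist
  rw [Real.min_rpow_one_div_rpow hq dist_nonneg zero_le_two, add_sub_min_mul_max_two_sub]

theorem tvConeDist_triangle (hq : 1 ≤ q) (a b c : X × ℝ≥0) :
    tvConeDist q a c ≤ tvConeDist q a b + tvConeDist q b c := by
  have hq0 : 0 < q := zero_lt_one.trans_le hq
  have htrunc : ∀ u v : X × ℝ≥0, 0 ≤ min (dist u.1 v.1) (2 ^ (1 / q)) := fun u v =>
    le_min dist_nonneg (by positivity)
  simp only [tvConeDist_eq_truncConeDist hq0]
  refine truncConeDist_triangle hq a.2.coe_nonneg b.2.coe_nonneg c.2.coe_nonneg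
    (htrunc a b) (htrunc b c) (htrunc a c) ?_
    (min_le_min_add_min dist_nonneg dist_nonneg (by positivity) (dist_triangle _ _ _))
  rw [Real.min_rpow_one_div_rpow hq0 dist_nonneg zero_le_two]
  exact min_le_right _ _

theorem tvConeDist_eq_zero_iff (hq : 0 < q) (a b : X × ℝ≥0) :
    tvConeDist q a b = 0 ↔ (a.2 = 0 ∧ b.2 = 0) ∨ (a.1 = b.1 ∧ a.2 = b.2) := by
  have htwo : (0 : ℝ) < 2 ^ (1 / q) := by positivity
  have hδ : min (dist a.1 b.1) (2 ^ (1 / q)) = 0 ↔ a.1 = b.1 := by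
    rw [min_eq_iff, dist_eq_zero]
    constructor
    · rintro (⟨h, -⟩ | ⟨h, -⟩)
      exacts [h, absurd h htwo.ne']
    · intro h
      exact Or.inl ⟨h, by rw [dist_eq_zero.2 h]; exact htwo.le⟩
  rw [tvConeDist_eq_truncConeDist hq, truncConeDist_eq_zero_iff hq.ne' a.2.coe_nonneg
    b.2.coe_nonneg (le_min dist_nonneg htwo.le), hδ, NNReal.coe_inj, NNReal.coe_eq_zero]
  constructor
  · rintro ⟨hab, h | h⟩
    exacts [Or.inl ⟨h, hab ▸ h⟩, Or.inr ⟨h, hab⟩]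
  · rintro (⟨ha, hb⟩ | ⟨h, hab⟩)
    exacts [⟨ha.trans hb.symm, Or.inl ha⟩, ⟨hab, Or.inr h⟩]

end tvConeDist

/-- **Statement 19.** For `q ≥ 1`, the partial optimal transport cone cost
`D((x,r),(y,s)) = (r + s − (r∧s)·(2 − d(x,y)^q)₊)^{1/q}` is symmetric, satisfies the
triangle inequality, and vanishes exactly when `r = s = 0` or (`x = y` and `r = s`);
consequently it descends to a distance on the cone `Co[X] = (X × [0,∞))/(X × {0})`. -/
theorem tv_cone_dist_is_distance {X : Type*} [MetricSpace X] (q : ℝ) (hq : 1 ≤ q) :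
    (∀ a b : X × ℝ≥0, tvConeDist q a b = tvConeDist q b a) ∧
    (∀ a b c : X × ℝ≥0, tvConeDist q a c ≤ tvConeDist q a b + tvConeDist q b c) ∧
    (∀ a b : X × ℝ≥0, tvConeDist q a b = 0 ↔
      (a.2 = 0 ∧ b.2 = 0) ∨ (a.1 = b.1 ∧ a.2 = b.2)) :=
  ⟨tvConeDist_comm, tvConeDist_triangle hq, tvConeDist_eq_zero_iff (zero_lt_one.trans_le hq)⟩

end
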